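/- Approximate support recovery (combined): Under the hypotheses ‖y − Y_i c_i*‖₂ ≤ βε where c* = (c_i*, c_{-i}*) is optimal for min ‖c‖₁ s.t. ‖y − Y c‖₂ ≤ γε, with Y_i = X_i + Z_i, columns of X_i unit vectors spanning S_i with inradius r_i, columns of Z_i of norm ≤ ε, y = x + z with x ∈ S_i unit and ‖z‖₂ ≤ ε, ‖z − Z_i c_i*‖₂ ≤ (γ/2)ε, and ε ≤ γ r_i/(2β + γ): then ‖c_{-i}*‖₁ ≤ ((2β + γ)/(2 r_i)) ε. -/

import Mathlib

/-!
The residual `x - Xi ci` lies in `S` and, by the triangle inequality, has norm at most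
`(β + γ/2) ε`. Since `symmHull Xi` contains the `r`-ball of `S`, it equals `Xi b` with
`‖b‖₁ ≤ (β + γ/2) ε / r`. Then `(ci + b, 0)` is feasible: its residual is
`(z - Zi ci) - Zi b`, of norm at most `γ ε / 2 + ‖b‖₁ ε`, and
`ε ≤ γ r / (2β + γ)` is exactly what makes this `≤ γ ε`. Optimality of `(ci, cmi)`
gives `‖ci‖₁ + ‖cmi‖₁ ≤ ‖ci + b‖₁ ≤ ‖ci‖₁ + ‖b‖₁`, so `‖cmi‖₁ ≤ ‖b‖₁`.
-/

open scoped BigOperators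

/-- Euclidean (ℓ2) norm of a vector. -/
noncomputable def l2 {n : ℕ} (v : Fin n → ℝ) : ℝ := Real.sqrt (∑ i, (v i) ^ 2)

/-- ℓ1 norm of a vector. -/
noncomputable def l1 {n : ℕ} (v : Fin n → ℝ) : ℝ := ∑ i, |v i|

/-- Matrix-vector product, where the matrix is given by its columns. -/
noncomputable def mv {n N : ℕ} (A : Fin N → Fin n → ℝ) (c : Fin N → ℝ) : Fin n → ℝ :=
  ∑ j, c j • A j

/-- Euclidean inner product. -/
noncomputable def dot {n : ℕ} (v w : Fin n → ℝ) : ℝ := ∑ i, v i * w i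

/-- Symmetrized convex hull of the columns of `X`. -/
def symmHull {n N : ℕ} (X : Fin N → Fin n → ℝ) : Set (Fin n → ℝ) :=
  convexHull ℝ (Set.range X ∪ Set.range (fun j => -X j))

lemma l2_eq_norm_toLp {n : ℕ} (v : Fin n → ℝ) : l2 v = ‖WithLp.toLp 2 v‖ := by
  simp [l2, EuclideanSpace.norm_eq]

lemma l2_nonneg {n : ℕ} (v : Fin n → ℝ) : 0 ≤ l2 v := by
  rw [l2_eq_norm_toLp]; exact norm_nonneg _

lemma l2_eq_zero_iff {n : ℕ} {v : Fin n → ℝ} : l2 v = 0 ↔ v = 0 := by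
  rw [l2_eq_norm_toLp, norm_eq_zero, WithLp.toLp_eq_zero]

lemma l2_sub_le {n : ℕ} (v w : Fin n → ℝ) : l2 (v - w) ≤ l2 v + l2 w := by
  simp only [l2_eq_norm_toLp, WithLp.toLp_sub]; exact norm_sub_le _ _

lemma l2_smul {n : ℕ} (t : ℝ) (v : Fin n → ℝ) : l2 (t • v) = |t| * l2 v := by
  simp only [l2_eq_norm_toLp, WithLp.toLp_smul, norm_smul, Real.norm_eq_abs]

lemma l1_smul {n : ℕ} (t : ℝ) (v : Fin n → ℝ) : l1 (t • v) = |t| * l1 v := by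
  simp [l1, abs_mul, Finset.mul_sum]

lemma l1_add_le {n : ℕ} (v w : Fin n → ℝ) : l1 (v + w) ≤ l1 v + l1 w := by
  simp only [l1, ← Finset.sum_add_distrib]
  exact Finset.sum_le_sum fun i _ => abs_add_le _ _

@[simp]
lemma l1_zero {n : ℕ} : l1 (0 : Fin n → ℝ) = 0 := by simp [l1]

section mv

variable {n N : ℕ}

@[simp]
lemma mv_zero (A : Fin N → Fin n → ℝ) : mv A 0 = 0 := by simp [mv]

lemma mv_add (A : Fin N → Fin n → ℝ) (c d : Fin N → ℝ) : mv A (c + d) = mv A c + mv A d := by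
  simp [mv, add_smul, Finset.sum_add_distrib]

lemma mv_smul (A : Fin N → Fin n → ℝ) (t : ℝ) (c : Fin N → ℝ) : mv A (t • c) = t • mv A c := by
  simp [mv, Finset.smul_sum, smul_smul]

lemma mv_add_columns {A B C : Fin N → Fin n → ℝ} (h : ∀ j, C j = A j + B j) (c : Fin N → ℝ) :
    mv C c = mv A c + mv B c := by
  simp only [mv, h, smul_add, Finset.sum_add_distrib]

lemma mv_mem {S : Submodule ℝ (Fin n → ℝ)} {A : Fin N → Fin n → ℝ} (hA : ∀ j, A j ∈ S)
    (c : Fin N → ℝ) : mv A c ∈ S :=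
  S.sum_mem fun j _ => S.smul_mem _ (hA j)

lemma l2_mv_le {A : Fin N → Fin n → ℝ} {ε : ℝ} (hA : ∀ j, l2 (A j) ≤ ε) (c : Fin N → ℝ) :
    l2 (mv A c) ≤ l1 c * ε := by
  simp only [l2_eq_norm_toLp, mv, WithLp.toLp_sum, WithLp.toLp_smul, l1, Finset.sum_mul]
  refine (norm_sum_le _ _).trans (Finset.sum_le_sum fun j _ => ?_)
  rw [norm_smul, Real.norm_eq_abs, ← l2_eq_norm_toLp]
  exact mul_le_mul_of_nonneg_left (hA j) (abs_nonneg _)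

lemma exists_l1_le_one_of_mem_symmHull {X : Fin N → Fin n → ℝ} {v : Fin n → ℝ}
    (hv : v ∈ symmHull X) : ∃ b, mv X b = v ∧ l1 b ≤ 1 := by
  refine convexHull_min (t := {w | ∃ b, mv X b = w ∧ l1 b ≤ 1}) ?_ ?_ hv
  · rintro w (⟨j, rfl⟩ | ⟨j, rfl⟩)
    · exact ⟨Pi.single j 1, by simp [mv, Pi.single_apply, ite_smul],
        by simp [l1, Pi.single_apply, apply_ite abs]⟩
    · exact ⟨Pi.single j (-1), by simp [mv, Pi.single_apply, ite_smul],
        by simp [l1, Pi.single_apply, apply_ite abs]⟩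
  · rintro _ ⟨b, rfl, hb⟩ _ ⟨b', rfl, hb'⟩ s t hs ht hst
    refine ⟨s • b + t • b', by rw [mv_add, mv_smul, mv_smul], ?_⟩
    calc l1 (s • b + t • b') ≤ s * l1 b + t * l1 b' := by
          simpa [l1_smul, abs_of_nonneg hs, abs_of_nonneg ht] using l1_add_le (s • b) (t • b')
      _ ≤ s * 1 + t * 1 := by gcongr
      _ = 1 := by rw [mul_one, mul_one, hst]

lemma exists_l1_le_of_inradius {S : Submodule ℝ (Fin n → ℝ)} {X : Fin N → Fin n → ℝ} {r : ℝ}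
    (hr : 0 < r) (hball : ∀ v ∈ S, l2 v ≤ r → v ∈ symmHull X) {v : Fin n → ℝ} (hv : v ∈ S) :
    ∃ b, mv X b = v ∧ l1 b ≤ l2 v / r := by
  rcases (l2_nonneg v).eq_or_lt with h0 | hpos
  · exact ⟨0, by rw [mv_zero, l2_eq_zero_iff.mp h0.symm], by simp [← h0]⟩
  have hrv : l2 ((r / l2 v) • v) ≤ r := by
    rw [l2_smul, abs_of_pos (div_pos hr hpos), div_mul_cancel₀ _ hpos.ne']
  obtain ⟨b, hb, hb1⟩ :=
    exists_l1_le_one_of_mem_symmHull (hball _ (S.smul_mem _ hv) hrv)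
  refine ⟨(l2 v / r) • b, ?_, ?_⟩
  · rw [mv_smul, hb, smul_smul, div_mul_div_cancel₀ hr.ne', div_self hpos.ne', one_smul]
  · rw [l1_smul, abs_of_pos (div_pos hpos hr)]
    exact mul_le_of_le_one_right (div_pos hpos hr).le hb1

end mv

theorem stmt_10_general {n Ni M : ℕ} (S : Submodule ℝ (Fin n → ℝ))
    (Xi Zi : Fin Ni → Fin n → ℝ) (Ymi : Fin M → Fin n → ℝ)
    (hXS : ∀ j, Xi j ∈ S)
    (r ε γ β : ℝ) (hr : 0 < r) (hε : 0 < ε) (hγ : 0 < γ) (hβ : γ / 2 < β)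
    (hball : ∀ v ∈ S, l2 v ≤ r → v ∈ symmHull Xi)
    (hZcol : ∀ j, l2 (Zi j) ≤ ε)
    (Yi : Fin Ni → Fin n → ℝ) (hYi : ∀ j, Yi j = Xi j + Zi j)
    (y x z : Fin n → ℝ) (hy : y = x + z) (hxS : x ∈ S)
    (ci : Fin Ni → ℝ) (cmi : Fin M → ℝ)
    (hopt : ∀ (di : Fin Ni → ℝ) (dmi : Fin M → ℝ),
      l2 (y - mv Yi di - mv Ymi dmi) ≤ γ * ε → l1 ci + l1 cmi ≤ l1 di + l1 dmi)
    (happrox : l2 (y - mv Yi ci) ≤ β * ε)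
    (hznoise : l2 (z - mv Zi ci) ≤ (γ / 2) * ε)
    (hεsmall : ε ≤ γ * r / (2 * β + γ)) :
    l1 cmi ≤ (2 * β + γ) / (2 * r) * ε := by
  subst hy
  have hY := mv_add_columns hYi
  obtain ⟨b, hbX, hb⟩ := exists_l1_le_of_inradius hr hball (S.sub_mem hxS (mv_mem hXS ci))
  have hxt : l2 (x - mv Xi ci) ≤ (β + γ / 2) * ε := by
    have := l2_sub_le (x + z - mv Yi ci) (z - mv Zi ci)
    rw [hY, show x + z - (mv Xi ci + mv Zi ci) - (z - mv Zi ci) = x - mv Xi ci by abel] at this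
    rw [hY] at happrox
    linarith
  have hb' : l1 b ≤ (2 * β + γ) / (2 * r) * ε :=
    calc l1 b ≤ l2 (x - mv Xi ci) / r := hb
      _ ≤ (β + γ / 2) * ε / r := by gcongr
      _ = (2 * β + γ) / (2 * r) * ε := by field_simp
  have hbε : l1 b * ε ≤ γ / 2 * ε := by
    refine mul_le_mul_of_nonneg_right (hb'.trans ?_) hε.le
    rw [le_div_iff₀ (by linarith)] at hεsmall
    rw [div_mul_eq_mul_div, div_le_iff₀ (by positivity)]
    nlinarith
  have hfeas : l2 (x + z - mv Yi (ci + b) - mv Ymi 0) ≤ γ * ε := by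
    have := l2_sub_le (z - mv Zi ci) (mv Zi b)
    rw [show z - mv Zi ci - mv Zi b = x + z - mv Yi (ci + b) - mv Ymi 0 by
      rw [mv_zero, mv_add, hY, hY, hbX]; abel] at this
    linarith [l2_mv_le hZcol b]
  linarith [hopt _ _ hfeas, l1_add_le ci b, l1_zero (n := M)]

/-- approximate support recovery (combined). -/
theorem stmt_10 {n Ni M : ℕ} (S : Submodule ℝ (Fin n → ℝ))
    (Xi Zi : Fin Ni → Fin n → ℝ) (Ymi : Fin M → Fin n → ℝ)
    (hXS : ∀ j, Xi j ∈ S) (hXunit : ∀ j, l2 (Xi j) = 1)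
    (hspan : Submodule.span ℝ (Set.range Xi) = S)
    (r ε γ β : ℝ) (hr : 0 < r) (hε : 0 < ε) (hγ : 0 < γ) (hβ : γ / 2 < β)
    (hball : ∀ v ∈ S, l2 v ≤ r → v ∈ symmHull Xi)
    (hZcol : ∀ j, l2 (Zi j) ≤ ε)
    (Yi : Fin Ni → Fin n → ℝ) (hYi : ∀ j, Yi j = Xi j + Zi j)
    (y x z : Fin n → ℝ) (hy : y = x + z) (hxS : x ∈ S) (hxunit : l2 x = 1)
    (hz : l2 z ≤ ε)
    (ci : Fin Ni → ℝ) (cmi : Fin M → ℝ)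
    (hfeas : l2 (y - mv Yi ci - mv Ymi cmi) ≤ γ * ε)
    (hopt : ∀ (di : Fin Ni → ℝ) (dmi : Fin M → ℝ),
      l2 (y - mv Yi di - mv Ymi dmi) ≤ γ * ε → l1 ci + l1 cmi ≤ l1 di + l1 dmi)
    (happrox : l2 (y - mv Yi ci) ≤ β * ε)
    (hznoise : l2 (z - mv Zi ci) ≤ (γ / 2) * ε)
    (hεsmall : ε ≤ γ * r / (2 * β + γ)) :
    l1 cmi ≤ (2 * β + γ) / (2 * r) * ε :=
  stmt_10_general S Xi Zi Ymi hXS r ε γ β hr hε hγ hβ hball hZcol Yi hYi y x z hy hxS ci cmi hopt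
    happrox hznoise hεsmall
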